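/- For fixed z ∈ ℝ and v ∈ (0,1), the limit as m → ∞ of (1 + z/(√m·v))^(mv−1) · (1 − z/(√m·(1−v)))^(m(1−v)−1) equals exp(−z²/(2v(1−v))). -/

import Mathlib

/-! With `s = √m`, the second-order expansion `log (1 + x) = x - x² / 2 + O(x³)` gives
`(c s² - 1) log (1 + a / s) = c a s - c a² / 2 + o(1)`. For `(c, a) = (v, z / v)` and
`(c, a) = (1 - v, -z / (1 - v))` the divergent terms `± z s` cancel, and the constants add up to
`-z² / (2 v) - z² / (2 (1 - v)) = -z² / (2 v (1 - v))`. -/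

open Filter Real Topology Asymptotics

lemma log_one_add_sub_self_add_sq_div_two_isBigO :
    (fun x : ℝ => log (1 + x) - x + x ^ 2 / 2) =O[𝓝 0] fun x => x ^ 3 := by
  rw [isBigO_iff]
  refine ⟨2, ?_⟩
  filter_upwards [eventually_norm_sub_lt (0 : ℝ) (by norm_num : (0 : ℝ) < 1 / 2)] with x hx
  rw [sub_zero, Real.norm_eq_abs] at hx
  have htaylor := abs_log_sub_add_sum_range_le (x := -x) (by rw [abs_neg]; linarith) 2
  simp only [Finset.sum_range_succ, Finset.sum_range_zero, abs_neg, sub_neg_eq_add] at htaylor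
  rw [Real.norm_eq_abs, Real.norm_eq_abs, abs_pow]
  calc |log (1 + x) - x + x ^ 2 / 2| ≤ |x| ^ 3 / (1 - |x|) := by
        convert htaylor using 2; push_cast; ring
    _ ≤ |x| ^ 3 / (1 / 2) := by gcongr; linarith
    _ = 2 * |x| ^ 3 := by ring

lemma tendsto_sq_mul_log_one_add_div_sub (a : ℝ) :
    Tendsto (fun s => s ^ 2 * log (1 + a / s) - a * s) atTop (𝓝 (-a ^ 2 / 2)) := by
  have hdiv : ∀ b : ℝ, Tendsto (fun s : ℝ => b / s) atTop (𝓝 0) := fun b =>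
    tendsto_const_nhds.div_atTop tendsto_id
  have hremainder : Tendsto (fun s => s ^ 2 * (log (1 + a / s) - a / s + (a / s) ^ 2 / 2))
      atTop (𝓝 0) := by
    refine ((isBigO_refl (fun s : ℝ => s ^ 2) atTop).mul
      (log_one_add_sub_self_add_sq_div_two_isBigO.comp_tendsto (hdiv a))).trans_tendsto ?_
    refine (hdiv (a ^ 3)).congr' ?_
    filter_upwards [eventually_ne_atTop 0] with s hs
    simp only [Function.comp_apply]
    field_simp
  rw [neg_div, ← zero_sub]
  refine (hremainder.sub_const (a ^ 2 / 2)).congr' ?_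
  filter_upwards [eventually_ne_atTop 0] with s hs
  field_simp
  ring

lemma tendsto_one_add_div_sqrt_rpow_div_exp (a c : ℝ) :
    Tendsto (fun m => (1 + a / √m) ^ (m * c - 1) / exp (c * a * √m)) atTop
      (𝓝 (exp (-(c * a ^ 2) / 2))) := by
  have hbase : Tendsto (fun m => 1 + a / √m) atTop (𝓝 1) := by
    simpa using tendsto_const_nhds.add (tendsto_const_nhds.div_atTop tendsto_sqrt_atTop)
  have hlog : Tendsto (fun m => log (1 + a / √m)) atTop (𝓝 0) := by
    simpa using hbase.log one_ne_zero
  have hexponent := ((tendsto_sq_mul_log_one_add_div_sub a).comp tendsto_sqrt_atTop).const_mul c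
    |>.sub hlog
  rw [sub_zero, mul_div_assoc', mul_neg] at hexponent
  refine ((continuous_exp.tendsto _).comp hexponent).congr' ?_
  filter_upwards [hbase.eventually_const_lt one_pos, eventually_ge_atTop 0] with m hbase hm
  rw [Function.comp_apply, rpow_def_of_pos hbase, ← exp_sub, Function.comp_apply, sq_sqrt hm]
  congr 1
  ring

theorem stmt_1 (z v : ℝ) (hv0 : 0 < v) (hv1 : v < 1) :
    Tendsto (fun m : ℝ =>
        (1 + z / (Real.sqrt m * v)) ^ (m * v - 1) *
          (1 - z / (Real.sqrt m * (1 - v))) ^ (m * (1 - v) - 1))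
      atTop (nhds (Real.exp (-z ^ 2 / (2 * v * (1 - v))))) := by
  have hv1' : 1 - v ≠ 0 := by linarith
  have hprod := (tendsto_one_add_div_sqrt_rpow_div_exp (z / v) v).mul
    (tendsto_one_add_div_sqrt_rpow_div_exp (-z / (1 - v)) (1 - v))
  -- the two exponential corrections `exp (± z √m)` cancel
  convert hprod using 2 with m
  · rw [div_mul_div_comm, ← exp_add, mul_div_cancel₀ _ hv0.ne', mul_div_cancel₀ _ hv1',
      neg_mul, add_neg_cancel, exp_zero, div_one, div_div, mul_comm v, neg_div, neg_div, div_div,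
      mul_comm (1 - v), ← sub_eq_add_neg]
  · rw [← exp_add]
    congr 1
    field_simp
    ring
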